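/- arXiv:2012.02838 — 5 statements merged into one kernel-verified Lean document; each statement's English description precedes it below -/
import Mathlib

section
/- Let M be a symmetric positive semidefinite d×d matrix, R a symmetric positive definite m×m matrix, B a d×m matrix, and γ > 0 such that γ²I − M is positive definite. Then the matrix Δ := I + B R⁻¹ Bᵀ M − γ⁻² M is invertible. -/
/-!
Write `N = B R⁻¹ Bᵀ ⪰ 0` and `c = γ⁻²`, so that `Δ = 1 + (N - c • 1) M`. With `S = √M`, the
Weinstein–Aronszajn identity `det (1 + X S · S) = det (1 + S · X S)` reduces invertibility of `Δ`
to that of `1 + S (N - c • 1) S = (1 - c • M) + S N S`, a positive definite matrix plus a positive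
semidefinite one.
-/

open Matrix
open scoped ComplexOrder

namespace Matrix

variable {n 𝕜 : Type*} [DecidableEq n] [RCLike 𝕜]

theorem PosDef.one_sub_inv_smul {M : Matrix n n 𝕜} {c : ℝ} (hM : (c • 1 - M).PosDef)
    (hc : 0 < c) : (1 - c⁻¹ • M).PosDef := by
  have h : 1 - c⁻¹ • M = c⁻¹ • (c • 1 - M) := by
    rw [smul_sub, smul_smul, inv_mul_cancel₀ hc.ne', one_smul]
  exact h ▸ hM.smul (inv_pos.mpr hc)

variable [Fintype n]

theorem PosSemidef.exists_isHermitian_mul_self_eq {M : Matrix n n 𝕜} (hM : M.PosSemidef) :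
    ∃ S : Matrix n n 𝕜, S.IsHermitian ∧ S * S = M := by
  open scoped MatrixOrder Matrix.Norms.L2Operator in
  exact ⟨CFC.sqrt M, (CFC.sqrt_nonneg M).posSemidef.isHermitian,
    CFC.sqrt_mul_sqrt_self M hM.nonneg⟩

theorem isUnit_one_add_sub_smul_mul {M N : Matrix n n 𝕜} {c : ℝ} (hM : M.PosSemidef)
    (hN : N.PosSemidef) (hcM : (1 - c • M).PosDef) : IsUnit (1 + (N - c • 1) * M) := by
  obtain ⟨S, hS, rfl⟩ := hM.exists_isHermitian_mul_self_eq
  have hsplit : 1 + S * ((N - c • 1) * S) = (1 - c • (S * S)) + S * N * Sᴴ := by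
    rw [hS.eq, Matrix.sub_mul, Matrix.mul_sub, Matrix.smul_mul, Matrix.one_mul, Matrix.mul_smul,
      Matrix.mul_assoc]
    abel
  have hpos : (1 + S * ((N - c • 1) * S)).PosDef :=
    hsplit ▸ hcM.add_posSemidef (hN.mul_mul_conjTranspose_same S)
  rw [← Matrix.mul_assoc, isUnit_iff_isUnit_det, det_one_add_mul_comm]
  exact hpos.det_pos.ne'.isUnit

end Matrix

theorem delta_invertible (d m : ℕ)
    (M : Matrix (Fin d) (Fin d) ℝ) (hM : M.PosSemidef)
    (R : Matrix (Fin m) (Fin m) ℝ) (hR : R.PosDef)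
    (B : Matrix (Fin d) (Fin m) ℝ)
    (γ : ℝ) (hγ : 0 < γ)
    (hγM : (γ ^ 2 • (1 : Matrix (Fin d) (Fin d) ℝ) - M).PosDef) :
    IsUnit ((1 : Matrix (Fin d) (Fin d) ℝ) + B * R⁻¹ * Bᵀ * M - (γ ^ 2)⁻¹ • M) := by
  have hN : (B * R⁻¹ * Bᵀ).PosSemidef := by
    simpa only [conjTranspose_eq_transpose_of_trivial] using
      hR.inv.posSemidef.mul_mul_conjTranspose_same B
  have hcM : (1 - (γ ^ 2)⁻¹ • M).PosDef := hγM.one_sub_inv_smul (by positivity)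
  have hΔ : 1 + B * R⁻¹ * Bᵀ * M - (γ ^ 2)⁻¹ • M =
      1 + (B * R⁻¹ * Bᵀ - (γ ^ 2)⁻¹ • 1) * M := by
    rw [Matrix.sub_mul, Matrix.smul_mul, Matrix.one_mul, add_sub_assoc]
  exact hΔ ▸ isUnit_one_add_sub_smul_mul hM hN hcM
end

section
/- Let M ⪰ 0 symmetric, R ≻ 0 symmetric, γ > 0 with γ²I − M ≻ 0, and define Δ = I + BR⁻¹BᵀM − γ⁻²M (invertible). Then the pair u* = −R⁻¹BᵀMΔ⁻¹Ax, d* = γ⁻²MΔ⁻¹Ax is a saddle point of f(u,d) = uᵀRu − γ²dᵀd + (Ax+Bu+d)ᵀM(Ax+Bu+d): for all u, d one has f(u*, d) ≤ f(u*, d*) ≤ f(u, d*). -/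
/-!
Write `z = Δ⁻¹Ax`. Expanding `Δz = Ax` shows that `z` is the closed-loop state `Ax + Bu* + d*`, and
the formulas for `u*`, `d*` say exactly that both partial gradients of `f` vanish there:
`Ru* + BᵀMz = 0` and `Mz = γ²d*`. Since `f` is convex in `u` (`R, M ⪰ 0`) and concave in `d`
(`γ²I - M ⪰ 0`), a stationary point is a saddle point.

`Δ` is invertible: if `Δz = 0` then `y = Mz` satisfies `γ²zᵀMz = yᵀy - γ²yᵀBR⁻¹Bᵀy ≤ yᵀy`, while
with `w = √M z` one has `γ²zᵀMz - yᵀy = wᵀ(γ²I - M)w`, which is positive unless `w = 0`. Hence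
`y = √M w = 0` and then `z = Δz = 0`.
-/

open Matrix

namespace Matrix

variable {n p R : Type*} [Fintype n] [Fintype p]

lemma IsSymm.mulVec_dotProduct [CommSemiring R] {S : Matrix n n R} (hS : S.IsSymm)
    (a b : n → R) : S *ᵥ a ⬝ᵥ b = a ⬝ᵥ S *ᵥ b := by
  rw [dotProduct_comm, ← dotProduct_transpose_mulVec, hS.eq]

lemma IsSymm.add_dotProduct_mulVec_add [CommRing R] {S : Matrix n n R} (hS : S.IsSymm)
    (a b : n → R) :
    (a + b) ⬝ᵥ S *ᵥ (a + b) = a ⬝ᵥ S *ᵥ a + 2 * (b ⬝ᵥ S *ᵥ a) + b ⬝ᵥ S *ᵥ b := by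
  rw [mulVec_add, dotProduct_add, add_dotProduct, add_dotProduct, ← hS.mulVec_dotProduct a b,
    dotProduct_comm (S *ᵥ a) b]
  ring

omit [Fintype n] in
lemma PosSemidef.isSymm {S : Matrix n n ℝ} (hS : S.PosSemidef) : S.IsSymm :=
  isHermitian_iff_isSymm.mp hS.1

lemma PosSemidef.dotProduct_mulVec_nonneg_real {S : Matrix n n ℝ} (hS : S.PosSemidef)
    (v : n → ℝ) : 0 ≤ v ⬝ᵥ S *ᵥ v := by
  simpa using hS.dotProduct_mulVec_nonneg v

lemma le_cost_of_stationary_control {R : Matrix p p ℝ} {M : Matrix n n ℝ} (hR : R.PosSemidef)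
    (hM : M.PosSemidef) (B : Matrix n p ℝ) (a : n → ℝ) {u₀ : p → ℝ}
    (h : R *ᵥ u₀ + Bᵀ *ᵥ (M *ᵥ (a + B *ᵥ u₀)) = 0) (u : p → ℝ) :
    u₀ ⬝ᵥ R *ᵥ u₀ + (a + B *ᵥ u₀) ⬝ᵥ M *ᵥ (a + B *ᵥ u₀) ≤
      u ⬝ᵥ R *ᵥ u + (a + B *ᵥ u) ⬝ᵥ M *ᵥ (a + B *ᵥ u) := by
  obtain ⟨w, rfl⟩ : ∃ w, u = u₀ + w := ⟨u - u₀, by abel⟩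
  have hcross : w ⬝ᵥ R *ᵥ u₀ + B *ᵥ w ⬝ᵥ M *ᵥ (a + B *ᵥ u₀) = 0 := by
    rw [dotProduct_comm (B *ᵥ w), ← dotProduct_transpose_mulVec B w, ← dotProduct_add, h,
      dotProduct_zero]
  rw [mulVec_add B, ← add_assoc a, hR.isSymm.add_dotProduct_mulVec_add u₀ w,
    hM.isSymm.add_dotProduct_mulVec_add (a + B *ᵥ u₀) (B *ᵥ w)]
  nlinarith [hR.dotProduct_mulVec_nonneg_real w, hM.dotProduct_mulVec_nonneg_real (B *ᵥ w)]

variable [DecidableEq n]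

open scoped MatrixOrder in
lemma PosSemidef.mulVec_eq_zero_of_smul_le {M : Matrix n n ℝ} (hM : M.PosSemidef) {c : ℝ}
    (hcM : (c • 1 - M).PosDef) {z : n → ℝ}
    (h : c * (z ⬝ᵥ M *ᵥ z) ≤ M *ᵥ z ⬝ᵥ M *ᵥ z) : M *ᵥ z = 0 := by
  set S := CFC.sqrt M
  have hSS : S * S = M := CFC.sqrt_mul_sqrt_self M hM.nonneg
  have hS : S.IsSymm := (CFC.sqrt_nonneg M).posSemidef.isSymm
  have hform : S *ᵥ z ⬝ᵥ (c • 1 - M) *ᵥ (S *ᵥ z) = c * (z ⬝ᵥ M *ᵥ z) - M *ᵥ z ⬝ᵥ M *ᵥ z := by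
    rw [sub_mulVec, smul_mulVec, one_mulVec, dotProduct_sub, dotProduct_smul, smul_eq_mul,
      hS.mulVec_dotProduct, hS.mulVec_dotProduct, ← hSS]
    simp only [← mulVec_mulVec]
    rw [← hS.mulVec_dotProduct z (S *ᵥ S *ᵥ S *ᵥ z), ← hS.mulVec_dotProduct (S *ᵥ z)]
  have hSz : S *ᵥ z = 0 := by
    by_contra hne
    have := hcM.dotProduct_mulVec_pos hne
    simp only [star_trivial, hform] at this
    linarith
  rw [← hSS, ← mulVec_mulVec, hSz, mulVec_zero]

lemma isUnit_one_add_mul_sub_inv_smul {P M : Matrix n n ℝ} (hP : P.PosSemidef)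
    (hM : M.PosSemidef) {c : ℝ} (hc : 0 < c) (hcM : (c • 1 - M).PosDef) :
    IsUnit (1 + P * M - c⁻¹ • M) := by
  rw [isUnit_iff_isUnit_det, isUnit_iff_ne_zero, Ne, ← exists_mulVec_eq_zero_iff]
  rintro ⟨z, hz0, hz⟩
  set y := M *ᵥ z
  have hker : z + P *ᵥ y - c⁻¹ • y = 0 := by
    simpa only [sub_mulVec, add_mulVec, one_mulVec, smul_mulVec, ← mulVec_mulVec] using hz
  have hdot : y ⬝ᵥ z + y ⬝ᵥ P *ᵥ y - c⁻¹ * (y ⬝ᵥ y) = 0 := by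
    simpa only [dotProduct_add, dotProduct_sub, dotProduct_smul, smul_eq_mul, dotProduct_zero]
      using congrArg (y ⬝ᵥ ·) hker
  rw [hM.isSymm.mulVec_dotProduct] at hdot
  have hy : y = 0 := by
    refine hM.mulVec_eq_zero_of_smul_le hcM ?_
    have hPy := mul_nonneg hc.le (hP.dotProduct_mulVec_nonneg_real y)
    have hMz : c * (z ⬝ᵥ M *ᵥ z) = y ⬝ᵥ y - c * (y ⬝ᵥ P *ᵥ y) := by
      field_simp at hdot
      linarith
    linarith
  rw [hy, mulVec_zero, smul_zero, add_zero, sub_zero] at hker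
  exact hz0 hker

lemma cost_le_of_stationary_disturbance {M : Matrix n n ℝ} {c : ℝ} (hcM : (c • 1 - M).PosSemidef)
    (hM : M.IsSymm) (a : n → ℝ) {d₀ : n → ℝ} (h : M *ᵥ (a + d₀) = c • d₀) (d : n → ℝ) :
    -c * (d ⬝ᵥ d) + (a + d) ⬝ᵥ M *ᵥ (a + d) ≤ -c * (d₀ ⬝ᵥ d₀) + (a + d₀) ⬝ᵥ M *ᵥ (a + d₀) := by
  obtain ⟨e, rfl⟩ : ∃ e, d = d₀ + e := ⟨d - d₀, by abel⟩
  have hgap : 0 ≤ c * (e ⬝ᵥ e) - e ⬝ᵥ M *ᵥ e := by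
    simpa only [sub_mulVec, smul_mulVec, one_mulVec, dotProduct_sub, dotProduct_smul, smul_eq_mul]
      using hcM.dotProduct_mulVec_nonneg_real e
  have hsq : (d₀ + e) ⬝ᵥ (d₀ + e) = d₀ ⬝ᵥ d₀ + 2 * (e ⬝ᵥ d₀) + e ⬝ᵥ e := by
    simpa only [one_mulVec] using isSymm_one.add_dotProduct_mulVec_add d₀ e
  rw [← add_assoc, hsq, hM.add_dotProduct_mulVec_add, h]
  simp only [dotProduct_smul, smul_eq_mul]
  linarith

end Matrix

theorem saddle_point_property (d m : ℕ) (x : Fin d → ℝ)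
    (A : Matrix (Fin d) (Fin d) ℝ) (B : Matrix (Fin d) (Fin m) ℝ)
    (R : Matrix (Fin m) (Fin m) ℝ) (hR : R.PosDef)
    (M : Matrix (Fin d) (Fin d) ℝ) (hM : M.PosSemidef)
    (γ : ℝ) (hγ : 0 < γ)
    (hγM : (γ ^ 2 • (1 : Matrix (Fin d) (Fin d) ℝ) - M).PosDef)
    (Δ : Matrix (Fin d) (Fin d) ℝ)
    (hΔ : Δ = (1 : Matrix (Fin d) (Fin d) ℝ) + B * R⁻¹ * Bᵀ * M - (γ ^ 2)⁻¹ • M)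
    (f : (Fin m → ℝ) → (Fin d → ℝ) → ℝ)
    (hf : ∀ u dvec, f u dvec = u ⬝ᵥ R.mulVec u - γ ^ 2 * (dvec ⬝ᵥ dvec) +
      (A.mulVec x + B.mulVec u + dvec) ⬝ᵥ M.mulVec (A.mulVec x + B.mulVec u + dvec))
    (ustar : Fin m → ℝ) (hustar : ustar = -(R⁻¹ * Bᵀ * M * Δ⁻¹ * A).mulVec x)
    (dstar : Fin d → ℝ) (hdstar : dstar = (γ ^ 2)⁻¹ • (M * Δ⁻¹ * A).mulVec x) :
    ∀ u : Fin m → ℝ, ∀ dvec : Fin d → ℝ,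
      f ustar dvec ≤ f ustar dstar ∧ f ustar dstar ≤ f u dstar := by
  have hγ2 : 0 < γ ^ 2 := by positivity
  have hBRB : (B * R⁻¹ * Bᵀ).PosSemidef := by
    simpa only [conjTranspose_eq_transpose_of_trivial]
      using hR.inv.posSemidef.mul_mul_conjTranspose_same B
  have hΔdet : IsUnit Δ.det :=
    (isUnit_iff_isUnit_det Δ).mp (hΔ ▸ isUnit_one_add_mul_sub_inv_smul hBRB hM hγ2 hγM)
  set z := Δ⁻¹ *ᵥ (A *ᵥ x)
  have hustar' : ustar = -((R⁻¹ * Bᵀ * M) *ᵥ z) := by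
    simp only [z, hustar, mulVec_mulVec, Matrix.mul_assoc]
  have hdstar' : dstar = (γ ^ 2)⁻¹ • M *ᵥ z := by
    simp only [z, hdstar, mulVec_mulVec, Matrix.mul_assoc]
  have hstate : A *ᵥ x + B *ᵥ ustar + dstar = z := by
    have hΔz : Δ *ᵥ z = A *ᵥ x := by rw [mulVec_mulVec, mul_nonsing_inv Δ hΔdet, one_mulVec]
    rw [← hΔz, hΔ, hustar', hdstar']
    simp only [sub_mulVec, add_mulVec, one_mulVec, smul_mulVec, mulVec_neg, ← mulVec_mulVec]
    abel
  have hcontrol : R *ᵥ ustar + Bᵀ *ᵥ (M *ᵥ z) = 0 := by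
    rw [hustar', mulVec_neg, mulVec_mulVec, ← Matrix.mul_assoc, ← Matrix.mul_assoc,
      mul_nonsing_inv R ((isUnit_iff_isUnit_det R).mp hR.isUnit), Matrix.one_mul, ← mulVec_mulVec,
      neg_add_cancel]
  have hdisturbance : M *ᵥ z = γ ^ 2 • dstar := by
    rw [hdstar', smul_smul, mul_inv_cancel₀ hγ2.ne', one_smul]
  intro u dvec
  simp only [hf]
  constructor
  · have := cost_le_of_stationary_disturbance hγM.posSemidef hM.isSymm (A *ᵥ x + B *ᵥ ustar)
      (by rwa [hstate]) dvec
    linarith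
  · have := le_cost_of_stationary_control hR.posSemidef hM B (A *ᵥ x + dstar) (u₀ := ustar)
      (by rwa [add_right_comm, hstate]) u
    rw [add_right_comm _ (B *ᵥ ustar), add_right_comm _ (B *ᵥ u)]
    linarith
end

section
/- If Q is symmetric positive semidefinite, M is symmetric positive semidefinite, R is symmetric positive definite, γ > 0, and γ²I − M ≻ 0, then the Riccati update M' := Q + Aᵀ M Δ⁻¹ A with Δ = I + BR⁻¹BᵀM − γ⁻²M is symmetric positive semidefinite. -/
/-!
Put `C := 1 - γ⁻² M`, positive definite and commuting with `M`, and `P := B R⁻¹ Bᵀ ⪰ 0`, so that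
`Δ = C + P M`. If `Δ x = 0`, then `0 = ⟪M x, Δ x⟫ = ⟪x, M C x⟫ + ⟪M x, P M x⟫` with both terms
nonnegative, which forces `M C x = 0`, hence `M x = 0`, `C x = 0` and `x = 0`: `Δ` is invertible.
Moreover `M Δ = Δᴴ M = M C + M P M ⪰ 0`, so `M Δ⁻¹ = Δ⁻ᴴ (M Δ) Δ⁻¹ ⪰ 0`, and the update is `Q`
plus a congruence of it.
-/

open Matrix
open scoped MatrixOrder ComplexOrder

namespace Matrix

variable {𝕜 n : Type*} [RCLike 𝕜] [Fintype n] [DecidableEq n]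

theorem PosSemidef.mul_of_commute {M C : Matrix n n 𝕜} (hM : M.PosSemidef) (hC : C.PosSemidef)
    (h : Commute M C) : (M * C).PosSemidef :=
  (h.mul_nonneg hM.nonneg hC.nonneg).posSemidef

variable {M C P : Matrix n n 𝕜}

theorem PosDef.isUnit_add_mul (hC : C.PosDef) (hP : P.PosSemidef) (hM : M.PosSemidef)
    (h : Commute M C) : IsUnit (C + P * M) := by
  have hC_inj : Function.Injective C.mulVec := mulVec_injective_iff_isUnit.mpr hC.isUnit
  have hMC := hM.mul_of_commute hC.posSemidef h
  refine (isUnit_iff_isUnit_det _).mpr (isUnit_iff_ne_zero.mpr fun hdet => ?_)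
  obtain ⟨x, hx0, hx⟩ := exists_mulVec_eq_zero_iff.mpr hdet
  have hsplit : star x ⬝ᵥ (M * C) *ᵥ x + star (M *ᵥ x) ⬝ᵥ P *ᵥ (M *ᵥ x) = 0 := by
    have hHerm : ∀ y, star (M *ᵥ x) ⬝ᵥ y = star x ⬝ᵥ M *ᵥ y := fun y => by
      rw [star_mulVec, ← dotProduct_mulVec, hM.isHermitian.eq]
    rw [← mulVec_mulVec, ← hHerm, ← dotProduct_add, mulVec_mulVec, ← add_mulVec, hx,
      dotProduct_zero]
  have hMCx : (M * C) *ᵥ x = 0 :=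
    (hMC.dotProduct_mulVec_zero_iff x).mp ((add_eq_zero_iff_of_nonneg
      (hMC.dotProduct_mulVec_nonneg x) (hP.dotProduct_mulVec_nonneg _)).mp hsplit).1
  have hMx : M *ᵥ x = 0 := hC_inj <| by rw [mulVec_mulVec, ← h.eq, hMCx, mulVec_zero]
  refine hx0 (hC_inj ?_)
  rwa [add_mulVec, ← mulVec_mulVec, hMx, mulVec_zero, add_zero, ← mulVec_zero C] at hx

theorem PosSemidef.mul_inv_add_mul (hM : M.PosSemidef) (hC : C.PosDef) (hP : P.PosSemidef)
    (h : Commute M C) : (M * (C + P * M)⁻¹).PosSemidef := by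
  set Δ := C + P * M
  have hΔ : IsUnit Δ := hC.isUnit_add_mul hP hM h
  have hMΔ : M * Δ = Δᴴ * M := by
    simp only [Δ, conjTranspose_add, conjTranspose_mul, hC.isHermitian.eq, hP.isHermitian.eq,
      hM.isHermitian.eq, mul_add, add_mul, h.eq, mul_assoc]
  have hMΔ_psd : (M * Δ).PosSemidef := by
    have hMPM := hP.conjTranspose_mul_mul_same M
    rw [hM.isHermitian.eq] at hMPM
    rw [mul_add, ← mul_assoc]
    exact (hM.mul_of_commute hC.posSemidef h).add hMPM
  have hΔ_star : IsUnit Δᴴ.det := (isUnit_iff_isUnit_det _).mp ((isUnit_conjTranspose Δ).mpr hΔ)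
  have hcongr : M * Δ⁻¹ = (Δ⁻¹)ᴴ * (M * Δ) * Δ⁻¹ := by
    rw [conjTranspose_nonsing_inv, hMΔ, ← mul_assoc, nonsing_inv_mul _ hΔ_star, one_mul]
  rw [hcongr]
  exact hMΔ_psd.conjTranspose_mul_mul_same _

end Matrix

theorem riccati_update_psd (d m : ℕ)
    (A : Matrix (Fin d) (Fin d) ℝ) (B : Matrix (Fin d) (Fin m) ℝ)
    (Q : Matrix (Fin d) (Fin d) ℝ) (hQ : Q.PosSemidef)
    (M : Matrix (Fin d) (Fin d) ℝ) (hM : M.PosSemidef)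
    (R : Matrix (Fin m) (Fin m) ℝ) (hR : R.PosDef)
    (γ : ℝ) (hγ : 0 < γ)
    (hγM : (γ ^ 2 • (1 : Matrix (Fin d) (Fin d) ℝ) - M).PosDef)
    (Δ : Matrix (Fin d) (Fin d) ℝ)
    (hΔ : Δ = (1 : Matrix (Fin d) (Fin d) ℝ) + B * R⁻¹ * Bᵀ * M - (γ ^ 2)⁻¹ • M) :
    (Q + Aᵀ * M * Δ⁻¹ * A).PosSemidef := by
  set C : Matrix (Fin d) (Fin d) ℝ := 1 - (γ ^ 2)⁻¹ • M
  have hC : C.PosDef := by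
    convert hγM.smul (inv_pos.mpr (pow_pos hγ 2)) using 1
    rw [smul_sub, smul_smul, inv_mul_cancel₀ (pow_pos hγ 2).ne', one_smul]
  have hCM : Commute M C := (Commute.one_right M).sub_right ((Commute.refl M).smul_right _)
  have hP : (B * R⁻¹ * Bᵀ).PosSemidef := by
    simpa using hR.inv.posSemidef.mul_mul_conjTranspose_same B
  have hΔC : Δ = C + B * R⁻¹ * Bᵀ * M := by rw [hΔ, add_sub_right_comm]
  have hK := (hM.mul_inv_add_mul hC hP hCM).conjTranspose_mul_mul_same A
  rw [← hΔC, conjTranspose_eq_transpose_of_trivial, ← mul_assoc] at hK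
  exact hQ.add hK
end

section
/- The matrix MΔ⁻¹ with Δ = I + BR⁻¹BᵀM − γ⁻²M is symmetric whenever M is symmetric positive semidefinite, R is symmetric positive definite, γ > 0, and γ²I − M ≻ 0; that is, MΔ⁻¹ = (MΔ⁻¹)ᵀ = Δ⁻ᵀM. -/
/-!
Write `Δ = A + S * M` with `A = 1 - γ⁻² M` positive definite and commuting with `M`, and
`S = B R⁻¹ Bᵀ` positive semidefinite. Since `A`, `S`, `M` are symmetric, `Δᵀ M = M Δ`, so
`M Δ⁻¹ = Δ⁻ᵀ M` as soon as `Δ` is invertible. If `Δ v = 0`, pairing with `y = M v` gives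
`vᵀ (M A) v + yᵀ S y = 0`, where both terms are nonnegative because commuting positive semidefinite
matrices have a positive semidefinite product. Hence `M A v = 0`, so `M v = 0`, then `A v = 0` and
`v = 0`.
-/

open Matrix
open scoped MatrixOrder ComplexOrder

namespace Matrix

variable {𝕜 n : Type*} [RCLike 𝕜] [Fintype n] [DecidableEq n]

theorem PosSemidef.mul_of_commute_s10 {A B : Matrix n n 𝕜} (hA : A.PosSemidef) (hB : B.PosSemidef)
    (h : Commute A B) : (A * B).PosSemidef :=
  (h.mul_nonneg hA.nonneg hB.nonneg).posSemidef

theorem PosDef.eq_zero_of_mulVec_eq_zero {A : Matrix n n 𝕜} (hA : A.PosDef) {v : n → 𝕜}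
    (hv : A *ᵥ v = 0) : v = 0 :=
  mulVec_injective_iff_isUnit.mpr hA.isUnit (by rw [hv, mulVec_zero])

theorem PosDef.isUnit_add_mul_of_commute {A S M : Matrix n n 𝕜} (hA : A.PosDef)
    (hS : S.PosSemidef) (hM : M.PosSemidef) (hAM : Commute A M) : IsUnit (A + S * M) := by
  rw [isUnit_iff_isUnit_det, isUnit_iff_ne_zero, Ne, ← exists_mulVec_eq_zero_iff]
  rintro ⟨v, hv0, hv⟩
  set y := M *ᵥ v with hy
  have hMA : (M * A).PosSemidef := hM.mul_of_commute_s10 hA.posSemidef hAM.symm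
  have hstar : star y = star v ᵥ* M := by rw [hy, star_mulVec, hM.isHermitian.eq]
  have hsum : star v ⬝ᵥ (M * A) *ᵥ v + star y ⬝ᵥ S *ᵥ y = 0 := by
    rw [← mulVec_mulVec, dotProduct_mulVec, ← hstar, ← dotProduct_add, hy, mulVec_mulVec _ S,
      ← add_mulVec, hv, dotProduct_zero]
  have hMAv : (M * A) *ᵥ v = 0 := (hMA.dotProduct_mulVec_zero_iff v).mp
    ((add_eq_zero_iff_of_nonneg (hMA.dotProduct_mulVec_nonneg v)
      (hS.dotProduct_mulVec_nonneg y)).mp hsum).1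
  have hy0 : y = 0 := hA.eq_zero_of_mulVec_eq_zero (by rwa [mulVec_mulVec, hAM.eq])
  refine hv0 (hA.eq_zero_of_mulVec_eq_zero ?_)
  rwa [add_mulVec, ← mulVec_mulVec, ← hy, hy0, mulVec_zero, add_zero] at hv

theorem transpose_add_mul_mul_eq_mul_add_mul {R : Type*} [CommSemiring R] {A S M : Matrix n n R}
    (hA : A.IsSymm) (hS : S.IsSymm) (hM : M.IsSymm) (hAM : Commute A M) :
    (A + S * M)ᵀ * M = M * (A + S * M) := by
  rw [transpose_add, transpose_mul, hA.eq, hS.eq, hM.eq, add_mul, mul_add, hAM.eq,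
    Matrix.mul_assoc]

theorem mul_nonsing_inv_eq_transpose_nonsing_inv_mul {R : Type*} [CommRing R]
    {Δ M : Matrix n n R} (hΔ : IsUnit Δ) (h : Δᵀ * M = M * Δ) : M * Δ⁻¹ = Δ⁻¹ᵀ * M := by
  have hdet : IsUnit Δ.det := (isUnit_iff_isUnit_det Δ).mp hΔ
  have hdetT : IsUnit Δᵀ.det := by rwa [det_transpose]
  calc M * Δ⁻¹ = Δᵀ⁻¹ * (Δᵀ * M) * Δ⁻¹ := by rw [nonsing_inv_mul_cancel_left Δᵀ M hdetT]
    _ = Δ⁻¹ᵀ * M := by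
      rw [h, ← Matrix.mul_assoc, mul_nonsing_inv_cancel_right Δ (Δᵀ⁻¹ * M) hdet,
        transpose_nonsing_inv]

end Matrix

theorem M_delta_inv_symm (d m : ℕ)
    (M : Matrix (Fin d) (Fin d) ℝ) (hM : M.PosSemidef)
    (R : Matrix (Fin m) (Fin m) ℝ) (hR : R.PosDef)
    (B : Matrix (Fin d) (Fin m) ℝ)
    (γ : ℝ) (hγ : 0 < γ)
    (hγM : (γ ^ 2 • (1 : Matrix (Fin d) (Fin d) ℝ) - M).PosDef)
    (Δ : Matrix (Fin d) (Fin d) ℝ)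
    (hΔ : Δ = (1 : Matrix (Fin d) (Fin d) ℝ) + B * R⁻¹ * Bᵀ * M - (γ ^ 2)⁻¹ • M) :
    M * Δ⁻¹ = (M * Δ⁻¹)ᵀ ∧ M * Δ⁻¹ = (Δ⁻¹)ᵀ * M := by
  set S := B * R⁻¹ * Bᵀ
  set A : Matrix (Fin d) (Fin d) ℝ := 1 - (γ ^ 2)⁻¹ • M
  have hΔA : Δ = A + S * M := by rw [hΔ, add_sub_right_comm]
  have hA : A.PosDef := by
    have h := hγM.smul (inv_pos.mpr (pow_pos hγ 2))
    rwa [smul_sub, smul_smul, inv_mul_cancel₀ (pow_pos hγ 2).ne', one_smul] at h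
  have hS : S.PosSemidef := by
    simpa only [conjTranspose_eq_transpose_of_trivial] using
      hR.inv.posSemidef.mul_mul_conjTranspose_same B
  have hAM : Commute A M := (Commute.one_left M).sub_left ((Commute.refl M).smul_left _)
  have hMsymm : M.IsSymm := isHermitian_iff_isSymm.mp hM.isHermitian
  have hkey : Δᵀ * M = M * Δ := hΔA ▸ transpose_add_mul_mul_eq_mul_add_mul
    (isHermitian_iff_isSymm.mp hA.isHermitian) (isHermitian_iff_isSymm.mp hS.isHermitian)
    hMsymm hAM
  have h := mul_nonsing_inv_eq_transpose_nonsing_inv_mul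
    (hΔA ▸ hA.isUnit_add_mul_of_commute hS hM hAM) hkey
  exact ⟨by rw [transpose_mul, hMsymm.eq, h], h⟩
end

section
/- Let γ ≥ γ' > 0 and suppose γ'²I − M ≻ 0 with M symmetric PSD and R symmetric positive definite. Then for every x ∈ ℝ^d, xᵀAᵀMΔ_γ⁻¹Ax ≤ xᵀAᵀMΔ_{γ'}⁻¹Ax, where Δ_γ = I + BR⁻¹BᵀM − γ⁻²M; i.e., the one-step saddle-point value is monotone nonincreasing in the attenuation parameter γ. -/
open Matrix
open scoped MatrixOrder

/-!
Write `M = S²` with `S = √M`, and `G = B R⁻¹ Bᵀ`. The push-through identity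
`S (1 + N S²)⁻¹ = (1 + S N S)⁻¹ S` turns `M Δ_γ⁻¹` into `S K_γ⁻¹ S` with the symmetric matrix
`K_γ = 1 + S G S - γ⁻² M`. Now `K_γ' = γ'⁻² (γ'² - M) + S G S` is positive definite and
`K_γ - K_γ' = (γ'⁻² - γ⁻²) M ⪰ 0`, so `K_γ⁻¹ ⪯ K_γ'⁻¹` since inversion is antitone in the Loewner
order; conjugating by `S A` gives the claim.
-/

namespace Matrix

variable {n : Type*} [Fintype n]

theorem mul_inv_one_add_mul_comm [DecidableEq n] {α : Type*} [CommRing α] (X Y : Matrix n n α) :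
    X * (1 + Y * X)⁻¹ = (1 + X * Y)⁻¹ * X := by
  by_cases h : IsUnit (1 + X * Y).det
  · have h' : IsUnit (1 + Y * X).det := by rwa [det_one_add_mul_comm]
    have hcomm : X * (1 + Y * X) = (1 + X * Y) * X := by
      simp only [Matrix.mul_add, Matrix.add_mul, Matrix.mul_one, Matrix.one_mul, Matrix.mul_assoc]
    calc X * (1 + Y * X)⁻¹ = (1 + X * Y)⁻¹ * ((1 + X * Y) * X) * (1 + Y * X)⁻¹ := by
          rw [nonsing_inv_mul_cancel_left _ X h]
      _ = (1 + X * Y)⁻¹ * X := by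
          rw [← hcomm, ← Matrix.mul_assoc, mul_nonsing_inv_cancel_right _ _ h']
  -- otherwise both inverses are the junk value `0`, the determinants being equal
  · have h' : ¬IsUnit (1 + Y * X).det := by rwa [det_one_add_mul_comm]
    rw [nonsing_inv_apply_not_isUnit _ h, nonsing_inv_apply_not_isUnit _ h', Matrix.mul_zero,
      Matrix.zero_mul]

theorem mul_self_mul_inv_one_add_sub_smul [DecidableEq n] {α : Type*} [CommRing α]
    (S G : Matrix n n α) (c : α) :
    S * S * (1 + G * (S * S) - c • (S * S))⁻¹ = S * (1 + S * G * S - c • (S * S))⁻¹ * S := by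
  have h₁ : 1 + G * (S * S) - c • (S * S) = 1 + ((G - c • 1) * S) * S := by
    rw [Matrix.sub_mul, Matrix.sub_mul, Matrix.smul_mul, Matrix.smul_mul, Matrix.one_mul,
      Matrix.mul_assoc G, add_sub_assoc]
  have h₂ : 1 + S * G * S - c • (S * S) = 1 + S * ((G - c • 1) * S) := by
    rw [← Matrix.mul_assoc, Matrix.mul_sub, Matrix.sub_mul, Matrix.mul_smul, Matrix.smul_mul,
      Matrix.mul_one, add_sub_assoc]
  rw [h₁, h₂, Matrix.mul_assoc S S, mul_inv_one_add_mul_comm, Matrix.mul_assoc]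

theorem PosDef.two_mul_dotProduct_sub_le [DecidableEq n] {P : Matrix n n ℝ} (hP : P.PosDef)
    (x y : n → ℝ) : 2 * (x ⬝ᵥ y) - y ⬝ᵥ P *ᵥ y ≤ x ⬝ᵥ P⁻¹ *ᵥ x := by
  -- expand `0 ≤ (y - P⁻¹ x) ⬝ᵥ P *ᵥ (y - P⁻¹ x)`
  set z := P⁻¹ *ᵥ x
  have hPz : P *ᵥ z = x := by
    rw [mulVec_mulVec, mul_nonsing_inv _ (isUnit_iff_ne_zero.mpr hP.det_pos.ne'), one_mulVec]
  have hPy : z ⬝ᵥ P *ᵥ y = y ⬝ᵥ P *ᵥ z := by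
    rw [dotProduct_mulVec, ← mulVec_transpose, ← conjTranspose_eq_transpose_of_trivial,
      hP.isHermitian, dotProduct_comm]
  have h := hP.posSemidef.dotProduct_mulVec_nonneg (y - z)
  rw [star_trivial, mulVec_sub, dotProduct_sub, sub_dotProduct, sub_dotProduct, hPz, hPy,
    hPz, dotProduct_comm z x] at h
  linarith [dotProduct_comm x y]

theorem dotProduct_mulVec_le_of_le {P Q : Matrix n n ℝ} (h : P ≤ Q) (x : n → ℝ) :
    x ⬝ᵥ P *ᵥ x ≤ x ⬝ᵥ Q *ᵥ x := by
  have h' := (le_iff.mp h).dotProduct_mulVec_nonneg x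
  rw [star_trivial, sub_mulVec, dotProduct_sub] at h'
  linarith

theorem PosDef.inv_anti [DecidableEq n] {P Q : Matrix n n ℝ} (hP : P.PosDef) (h : P ≤ Q) :
    Q⁻¹ ≤ P⁻¹ := by
  have hQ : Q.PosDef := by simpa using hP.add_posSemidef (le_iff.mp h)
  refine le_iff.mpr <| .of_dotProduct_mulVec_nonneg (hP.inv.isHermitian.sub hQ.inv.isHermitian)
    fun x => ?_
  set y := Q⁻¹ *ᵥ x
  have hQy : y ⬝ᵥ Q *ᵥ y = x ⬝ᵥ y := by
    rw [mulVec_mulVec, mul_nonsing_inv _ (isUnit_iff_ne_zero.mpr hQ.det_pos.ne'), one_mulVec,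
      dotProduct_comm]
  rw [star_trivial, sub_mulVec, dotProduct_sub, sub_nonneg]
  calc x ⬝ᵥ y = 2 * (x ⬝ᵥ y) - y ⬝ᵥ Q *ᵥ y := by rw [hQy]; ring
    _ ≤ 2 * (x ⬝ᵥ y) - y ⬝ᵥ P *ᵥ y := by gcongr; exact dotProduct_mulVec_le_of_le h y
    _ ≤ x ⬝ᵥ P⁻¹ *ᵥ x := hP.two_mul_dotProduct_sub_le x y

end Matrix

theorem value_monotone_in_gamma (d m : ℕ)
    (A : Matrix (Fin d) (Fin d) ℝ) (B : Matrix (Fin d) (Fin m) ℝ)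
    (M : Matrix (Fin d) (Fin d) ℝ) (hM : M.PosSemidef)
    (R : Matrix (Fin m) (Fin m) ℝ) (hR : R.PosDef)
    (γ γ' : ℝ) (hγ' : 0 < γ') (hγγ' : γ' ≤ γ)
    (hγ'M : (γ' ^ 2 • (1 : Matrix (Fin d) (Fin d) ℝ) - M).PosDef)
    (Δγ Δγ' : Matrix (Fin d) (Fin d) ℝ)
    (hΔγ : Δγ = (1 : Matrix (Fin d) (Fin d) ℝ) + B * R⁻¹ * Bᵀ * M - (γ ^ 2)⁻¹ • M)
    (hΔγ' : Δγ' = (1 : Matrix (Fin d) (Fin d) ℝ) + B * R⁻¹ * Bᵀ * M - (γ' ^ 2)⁻¹ • M) :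
    ∀ x : Fin d → ℝ,
      x ⬝ᵥ (Aᵀ * M * Δγ⁻¹ * A).mulVec x ≤ x ⬝ᵥ (Aᵀ * M * Δγ'⁻¹ * A).mulVec x := by
  obtain ⟨S, hS, rfl⟩ : ∃ S : Matrix (Fin d) (Fin d) ℝ, S.IsHermitian ∧ S * S = M :=
    ⟨CFC.sqrt M, (CFC.sqrt_nonneg M).isSelfAdjoint, CFC.sqrt_mul_sqrt_self M hM.nonneg⟩
  set G := B * R⁻¹ * Bᵀ
  have hG : G.PosSemidef := hR.inv.posSemidef.mul_mul_conjTranspose_same B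
  let K : ℝ → Matrix (Fin d) (Fin d) ℝ := fun c => 1 + S * G * S - c • (S * S)
  have hvalue (c : ℝ) : Aᵀ * (S * S) * (1 + G * (S * S) - c • (S * S))⁻¹ * A
      = star (S * A) * (K c)⁻¹ * (S * A) := by
    rw [Matrix.mul_assoc Aᵀ, mul_self_mul_inv_one_add_sub_smul, star_eq_conjTranspose,
      conjTranspose_mul, hS, conjTranspose_eq_transpose_of_trivial]
    simp only [K, Matrix.mul_assoc]
  have hKpos : (K (γ' ^ 2)⁻¹).PosDef := by
    have hsplit : K (γ' ^ 2)⁻¹ = (γ' ^ 2)⁻¹ • (γ' ^ 2 • 1 - S * S) + S * G * Sᴴ := by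
      simp only [K]
      rw [hS, smul_sub, smul_smul, inv_mul_cancel₀ (by positivity), one_smul]
      abel
    rw [hsplit]
    exact (hγ'M.smul (by positivity)).add_posSemidef (hG.mul_mul_conjTranspose_same S)
  have hKmono : K (γ' ^ 2)⁻¹ ≤ K (γ ^ 2)⁻¹ := by
    have hc : (γ ^ 2)⁻¹ ≤ (γ' ^ 2)⁻¹ := inv_anti₀ (by positivity) (by gcongr)
    rw [le_iff, show K (γ ^ 2)⁻¹ - K (γ' ^ 2)⁻¹ = ((γ' ^ 2)⁻¹ - (γ ^ 2)⁻¹) • (S * S) by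
      simp only [K, sub_smul]; abel]
    exact hM.smul (sub_nonneg.mpr hc)
  intro x
  rw [hΔγ, hΔγ', hvalue, hvalue]
  exact dotProduct_mulVec_le_of_le
    (star_left_conjugate_le_conjugate (hKpos.inv_anti hKmono) _) x
end
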